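/- The second-order shading identity at a point along an isophote: for a Lambertian image I of a graph surface, I_vv = -I‖dN(v)‖² + ∇I · H⁻¹(v[H]v), where v is the unit isophote direction, H is the Hessian of the height function, and dN is the shape operator. -/

import Mathlib

open Real RealInnerProductSpace

set_option maxHeartbeats 2000000 in
/-- The second-order shading equation along the isophote direction:
`I_vv = -I‖dN(v)‖² + ∇I · H⁻¹ (v[H] v)`, where `H` is the Hessian of the height
function `f`, `v[H]` its directional derivative in the isophote direction `v`, and
`dN` the differential of the Gauss map. The statement involves no light source
direction except through image-measurable quantities. -/
theorem second_order_shading_equation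
    (f : EuclideanSpace ℝ (Fin 2) → ℝ) (hf : ContDiff ℝ (⊤ : ℕ∞) f)
    (p : EuclideanSpace ℝ (Fin 2))
    (N : EuclideanSpace ℝ (Fin 2) → EuclideanSpace ℝ (Fin 3))
    (hN : ∀ q, N q = (Real.sqrt (1 + ‖gradient f q‖ ^ 2))⁻¹ •
      (WithLp.equiv 2 (Fin 3 → ℝ)).symm
        ![-(fderiv ℝ f q (EuclideanSpace.single 0 1)),
          -(fderiv ℝ f q (EuclideanSpace.single 1 1)), 1])
    (L : EuclideanSpace ℝ (Fin 3))
    (I : EuclideanSpace ℝ (Fin 2) → ℝ)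
    (hI : ∀ q, I q = ⟪L, N q⟫)
    (Hm : EuclideanSpace ℝ (Fin 2) → Matrix (Fin 2) (Fin 2) ℝ)
    (hHm : ∀ q i j, Hm q i j =
      fderiv ℝ (fun r => fderiv ℝ f r (EuclideanSpace.single j 1)) q
        (EuclideanSpace.single i 1))
    (hHinv : IsUnit (Hm p))
    (v : EuclideanSpace ℝ (Fin 2)) (hv : ‖v‖ = 1)
    (hiso : fderiv ℝ I p v = 0)
    (DvH : Matrix (Fin 2) (Fin 2) ℝ)
    (hDvH : ∀ i j, DvH i j = fderiv ℝ (fun q => Hm q i j) p v) :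
    fderiv ℝ (fun q => fderiv ℝ I q v) p v =
      -(I p) * ‖fderiv ℝ N p v‖ ^ 2 +
        dotProduct (fun i => gradient I p i)
          (Matrix.mulVec (Hm p)⁻¹ (Matrix.mulVec DvH (fun i => v i))) := by
  classical
  -- basic notation
  set e : Fin 2 → EuclideanSpace ℝ (Fin 2) := fun i => EuclideanSpace.single i (1:ℝ) with he
  set u : Fin 2 → EuclideanSpace ℝ (Fin 2) → ℝ := fun i q => fderiv ℝ f q (e i) with hu_def
  have hu : ∀ i, ContDiff ℝ (⊤ : ℕ∞) (u i) := fun i =>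
    (hf.fderiv_right (by simp)).clm_apply contDiff_const
  set h : Fin 2 → Fin 2 → EuclideanSpace ℝ (Fin 2) → ℝ :=
    fun i j q => fderiv ℝ (u j) q (e i) with hh_def
  have hh : ∀ i j, ContDiff ℝ (⊤ : ℕ∞) (h i j) := fun i j =>
    ((hu j).fderiv_right (by simp)).clm_apply contDiff_const
  set g : EuclideanSpace ℝ (Fin 2) → ℝ :=
    fun q => (Real.sqrt (1 + (u 0 q)^2 + (u 1 q)^2))⁻¹ with hg_def
  -- gradient coordinates and norm
  have hgradco : ∀ (φ : EuclideanSpace ℝ (Fin 2) → ℝ) (q : EuclideanSpace ℝ (Fin 2)) (i : Fin 2),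
      gradient φ q i = fderiv ℝ φ q (e i) := by
    intro φ q i
    have h1 : (gradient φ q) i = ⟪gradient φ q, e i⟫ := by
      simp only [he, EuclideanSpace.inner_single_right]
      simp
    rw [h1]
    unfold gradient
    exact InnerProductSpace.toDual_symm_apply
  have hgrad : ∀ q, 1 + ‖gradient f q‖^2 = 1 + (u 0 q)^2 + (u 1 q)^2 := by
    intro q
    have : ‖gradient f q‖^2 = (gradient f q 0)^2 + (gradient f q 1)^2 := by
      rw [EuclideanSpace.real_norm_sq_eq, Fin.sum_univ_two]
    rw [this, hgradco f q 0, hgradco f q 1]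
    show 1 + (u 0 q ^ 2 + u 1 q ^ 2) = 1 + u 0 q ^ 2 + u 1 q ^ 2
    try ring
  -- N coordinates
  have hNco : ∀ q, N q = (WithLp.equiv 2 (Fin 3 → ℝ)).symm
      ![-(g q * u 0 q), -(g q * u 1 q), g q] := by
    intro q
    rw [hN q]
    apply PiLp.ext
    intro k
    have hgq : (Real.sqrt (1 + ‖gradient f q‖ ^ 2))⁻¹ = g q := by rw [hg_def, hgrad q]
    fin_cases k <;>
      simp [WithLp.equiv_symm_apply, PiLp.toLp_apply, hgq, hu_def, he] <;> try ring
  -- I as explicit scalar function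
  have hIfun : I = fun q => L 0 * -(g q * u 0 q) + L 1 * -(g q * u 1 q) + L 2 * g q := by
    funext q
    rw [hI q, hNco q]
    simp [PiLp.inner_apply, Fin.sum_univ_three, WithLp.equiv_symm_apply, PiLp.toLp_apply]
    try ring
  -- differentiability basics
  have hDu : ∀ (i : Fin 2) (q : EuclideanSpace ℝ (Fin 2)),
      HasFDerivAt (u i) (fderiv ℝ (u i) q) q := fun i q =>
    (((hu i).differentiable (by simp)) q).hasFDerivAt
  have hDh : ∀ (a b : Fin 2) (q : EuclideanSpace ℝ (Fin 2)),
      HasFDerivAt (h a b) (fderiv ℝ (h a b) q) q := fun a b q =>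
    (((hh a b).differentiable (by simp)) q).hasFDerivAt
  -- derivative of g
  have hgpos : ∀ q, 0 < Real.sqrt (1 + (u 0 q)^2 + (u 1 q)^2) := by
    intro q
    apply Real.sqrt_pos.2
    positivity
  have hgq : ∀ q, HasFDerivAt g
      ((-(g q * (g q * g q))) • ((u 0 q) • fderiv ℝ (u 0) q + (u 1 q) • fderiv ℝ (u 1) q)) q := by
    intro q
    have hapos : (0:ℝ) < 1 + (u 0 q)^2 + (u 1 q)^2 := by positivity
    have hA : HasFDerivAt (fun r => 1 + (u 0 r)^2 + (u 1 r)^2)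
        ((2 * u 0 q) • fderiv ℝ (u 0) q + (2 * u 1 q) • fderiv ℝ (u 1) q) q := by
      have h0 : HasFDerivAt (fun r => (u 0 r)^2) ((2 * u 0 q) • fderiv ℝ (u 0) q) q := by
        simpa [pow_two, two_mul, add_smul] using (show HasFDerivAt (fun r => u 0 r * u 0 r) _ q from (hDu 0 q).mul (hDu 0 q))
      have h1 : HasFDerivAt (fun r => (u 1 r)^2) ((2 * u 1 q) • fderiv ℝ (u 1) q) q := by
        simpa [pow_two, two_mul, add_smul] using (show HasFDerivAt (fun r => u 1 r * u 1 r) _ q from (hDu 1 q).mul (hDu 1 q))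
      simpa [add_assoc] using (h0.add h1).const_add 1
    have hsq : HasFDerivAt (fun r => Real.sqrt (1 + (u 0 r)^2 + (u 1 r)^2))
        ((1 / (2 * Real.sqrt (1 + (u 0 q)^2 + (u 1 q)^2))) •
          ((2 * u 0 q) • fderiv ℝ (u 0) q + (2 * u 1 q) • fderiv ℝ (u 1) q)) q :=
      (Real.hasDerivAt_sqrt hapos.ne').comp_hasFDerivAt q hA
    have hinv : HasFDerivAt g _ q := (hasDerivAt_inv (hgpos q).ne').comp_hasFDerivAt q hsq
    refine hinv.congr_fderiv ?_
    ext y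
    simp only [ContinuousLinearMap.smul_apply, ContinuousLinearMap.add_apply, smul_eq_mul,
      hg_def]
    set s := Real.sqrt (1 + (u 0 q)^2 + (u 1 q)^2) with hs_def
    have hs0 : s ≠ 0 := (hgpos q).ne'
    field_simp
    try ring
  -- first derivative of I, scalar form
  have hIq : ∀ q, HasFDerivAt I
      (L 0 • -(g q • fderiv ℝ (u 0) q + u 0 q •
          ((-(g q * (g q * g q))) • ((u 0 q) • fderiv ℝ (u 0) q + (u 1 q) • fderiv ℝ (u 1) q))) +
        L 1 • -(g q • fderiv ℝ (u 1) q + u 1 q •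
          ((-(g q * (g q * g q))) • ((u 0 q) • fderiv ℝ (u 0) q + (u 1 q) • fderiv ℝ (u 1) q))) +
        L 2 • ((-(g q * (g q * g q))) • ((u 0 q) • fderiv ℝ (u 0) q + (u 1 q) • fderiv ℝ (u 1) q))) q := by
    intro q
    rw [hIfun]
    exact ((((hgq q).mul (hDu 0 q)).neg.const_mul (L 0)).add
      (((hgq q).mul (hDu 1 q)).neg.const_mul (L 1))).add ((hgq q).const_mul (L 2))
  have hIy : ∀ q y, fderiv ℝ I q y =
      L 0 * -(g q * fderiv ℝ (u 0) q y + u 0 q *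
          (-(g q * (g q * g q)) * (u 0 q * fderiv ℝ (u 0) q y + u 1 q * fderiv ℝ (u 1) q y))) +
        L 1 * -(g q * fderiv ℝ (u 1) q y + u 1 q *
          (-(g q * (g q * g q)) * (u 0 q * fderiv ℝ (u 0) q y + u 1 q * fderiv ℝ (u 1) q y))) +
        L 2 * (-(g q * (g q * g q)) * (u 0 q * fderiv ℝ (u 0) q y + u 1 q * fderiv ℝ (u 1) q y)) := by
    intro q y
    rw [(hIq q).fderiv]
    simp only [ContinuousLinearMap.add_apply, ContinuousLinearMap.smul_apply,
      ContinuousLinearMap.neg_apply, smul_eq_mul]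
    try ring
  -- directional derivatives of u along v
  have hv2 : v = v 0 • e 0 + v 1 • e 1 := by
    apply PiLp.ext
    intro i
    fin_cases i <;> simp [he, EuclideanSpace.single_apply]
  have hDuv : ∀ (j : Fin 2) (q : EuclideanSpace ℝ (Fin 2)),
      fderiv ℝ (u j) q v = v 0 * h 0 j q + v 1 * h 1 j q := by
    intro j q
    conv_lhs => rw [hv2]
    rw [map_add, map_smul, map_smul]
    rfl
  have hUe : ∀ (a b : Fin 2) (q : EuclideanSpace ℝ (Fin 2)),
      fderiv ℝ (u b) q (e a) = h a b q := fun a b q => rfl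
  -- rewrite DvH as derivative of h
  have hT : ∀ (a b : Fin 2), fderiv ℝ (h a b) p v = DvH a b := by
    intro a b
    rw [hDvH a b]
    have hfe : (fun q => Hm q a b) = h a b := funext fun q => hHm q a b
    rw [hfe]
  have hiso' := (hIy p v).symm.trans hiso
  rw [hDuv 0 p, hDuv 1 p] at hiso'
  -- the function q ↦ fderiv I q v in explicit form
  have hFeq : (fun q => fderiv ℝ I q v) = fun q => L 0 * -(g q * (v 0 * h 0 0 q + v 1 * h 1 0 q) + u 0 q * (-(g q * (g q * g q)) * (u 0 q * (v 0 * h 0 0 q + v 1 * h 1 0 q) + u 1 q * (v 0 * h 0 1 q + v 1 * h 1 1 q)))) + L 1 * -(g q * (v 0 * h 0 1 q + v 1 * h 1 1 q) + u 1 q * (-(g q * (g q * g q)) * (u 0 q * (v 0 * h 0 0 q + v 1 * h 1 0 q) + u 1 q * (v 0 * h 0 1 q + v 1 * h 1 1 q)))) + L 2 * (-(g q * (g q * g q)) * (u 0 q * (v 0 * h 0 0 q + v 1 * h 1 0 q) + u 1 q * (v 0 * h 0 1 q + v 1 * h 1 1 q))) := by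
    funext q
    rw [hIy q v, hDuv 0 q, hDuv 1 q]
  -- second derivative
  have hP0 := ((hDh 0 0 p).const_mul (v 0)).add ((hDh 1 0 p).const_mul (v 1))
  have hP1 := ((hDh 0 1 p).const_mul (v 0)).add ((hDh 1 1 p).const_mul (v 1))
  have hGc := ((hgq p).mul ((hgq p).mul (hgq p))).neg
  have hS := ((hDu 0 p).mul hP0).add ((hDu 1 p).mul hP1)
  have hGS := hGc.mul hS
  have hF' := ((((((hgq p).mul hP0).add ((hDu 0 p).mul hGS)).neg.const_mul (L 0)).add
      ((((hgq p).mul hP1).add ((hDu 1 p).mul hGS)).neg.const_mul (L 1))).add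
      (hGS.const_mul (L 2)))
  have hLHS : fderiv ℝ (fun q => fderiv ℝ I q v) p v = L 0 * -((-((v 0 * h 0 0 p + v 1 * h 1 0 p)^2 + (v 0 * h 0 1 p + v 1 * h 1 1 p)^2 + u 0 p * (v 0 * DvH 0 0 + v 1 * DvH 1 0) + u 1 p * (v 0 * DvH 0 1 + v 1 * DvH 1 1)) * g p ^ 3 + 3 * (u 0 p * (v 0 * h 0 0 p + v 1 * h 1 0 p) + u 1 p * (v 0 * h 0 1 p + v 1 * h 1 1 p))^2 * g p ^ 5) * u 0 p + 2 * (-((u 0 p * (v 0 * h 0 0 p + v 1 * h 1 0 p) + u 1 p * (v 0 * h 0 1 p + v 1 * h 1 1 p))) * g p ^ 3) * (v 0 * h 0 0 p + v 1 * h 1 0 p) + g p * (v 0 * DvH 0 0 + v 1 * DvH 1 0)) + L 1 * -((-((v 0 * h 0 0 p + v 1 * h 1 0 p)^2 + (v 0 * h 0 1 p + v 1 * h 1 1 p)^2 + u 0 p * (v 0 * DvH 0 0 + v 1 * DvH 1 0) + u 1 p * (v 0 * DvH 0 1 + v 1 * DvH 1 1)) * g p ^ 3 + 3 * (u 0 p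 * (v 0 * h 0 0 p + v 1 * h 1 0 p) + u 1 p * (v 0 * h 0 1 p + v 1 * h 1 1 p))^2 * g p ^ 5) * u 1 p + 2 * (-((u 0 p * (v 0 * h 0 0 p + v 1 * h 1 0 p) + u 1 p * (v 0 * h 0 1 p + v 1 * h 1 1 p))) * g p ^ 3) * (v 0 * h 0 1 p + v 1 * h 1 1 p) + g p * (v 0 * DvH 0 1 + v 1 * DvH 1 1)) + L 2 * (-((v 0 * h 0 0 p + v 1 * h 1 0 p)^2 + (v 0 * h 0 1 p + v 1 * h 1 1 p)^2 + u 0 p * (v 0 * DvH 0 0 + v 1 * DvH 1 0) + u 1 p * (v 0 * DvH 0 1 + v 1 * DvH 1 1)) * g p ^ 3 + 3 * (u 0 p * (v 0 * h 0 0 p + v 1 * h 1 0 p) + u 1 p * (v 0 * h 0 1 p + v 1 * h 1 1 p))^2 * g p ^ 5) := by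
    rw [hFeq]
    erw [hF'.fderiv]
    simp only [ContinuousLinearMap.add_apply, ContinuousLinearMap.smul_apply,
      ContinuousLinearMap.neg_apply, smul_eq_mul, hDuv, hT, Pi.add_apply, Pi.mul_apply, Pi.neg_apply]
    ring
  -- value of I at p
  have hIp : I p = L 0 * -(g p * u 0 p) + L 1 * -(g p * u 1 p) + L 2 * g p := by
    rw [hIfun]
  -- derivative of N
  have hMd : HasFDerivAt (fun q => ![-(g q * u 0 q), -(g q * u 1 q), g q])
      (ContinuousLinearMap.pi ![(-(g p • fderiv ℝ (u 0) p + u 0 p • ((-(g p * (g p * g p))) • (u 0 p • fderiv ℝ (u 0) p + u 1 p • fderiv ℝ (u 1) p)))), (-(g p • fderiv ℝ (u 1) p + u 1 p • ((-(g p * (g p * g p))) • (u 0 p • fderiv ℝ (u 0) p + u 1 p • fderiv ℝ (u 1) p)))), ((-(g p * (g p * g p))) • (u 0 p • fderiv ℝ (u 0) p + u 1 p • fderiv ℝ (u 1) p))]) p := by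
    apply hasFDerivAt_pi''
    intro k
    fin_cases k
    · simpa [ContinuousLinearMap.proj_pi] using (show HasFDerivAt (fun x => -(g x * u 0 x)) _ p from ((hgq p).mul (hDu 0 p)).neg)
    · simpa [ContinuousLinearMap.proj_pi] using (show HasFDerivAt (fun x => -(g x * u 1 x)) _ p from ((hgq p).mul (hDu 1 p)).neg)
    · simpa [ContinuousLinearMap.proj_pi] using hgq p
  have hNfun : N = fun q => (PiLp.continuousLinearEquiv 2 ℝ (fun _ : Fin 3 => ℝ)).symm
      (![-(g q * u 0 q), -(g q * u 1 q), g q]) := by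
    funext q
    rw [hNco q]
    rfl
  have hNd : HasFDerivAt N
      (((PiLp.continuousLinearEquiv 2 ℝ (fun _ : Fin 3 => ℝ)).symm :
          (Fin 3 → ℝ) →L[ℝ] EuclideanSpace ℝ (Fin 3)).comp
        (ContinuousLinearMap.pi ![(-(g p • fderiv ℝ (u 0) p + u 0 p • ((-(g p * (g p * g p))) • (u 0 p • fderiv ℝ (u 0) p + u 1 p • fderiv ℝ (u 1) p)))), (-(g p • fderiv ℝ (u 1) p + u 1 p • ((-(g p * (g p * g p))) • (u 0 p • fderiv ℝ (u 0) p + u 1 p • fderiv ℝ (u 1) p)))), ((-(g p * (g p * g p))) • (u 0 p • fderiv ℝ (u 0) p + u 1 p • fderiv ℝ (u 1) p))])) p := by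
    rw [hNfun]
    exact ((PiLp.continuousLinearEquiv 2 ℝ (fun _ : Fin 3 => ℝ)).symm.comp_hasFDerivAt_iff).mpr hMd
  have hNn : ‖fderiv ℝ N p v‖ ^ 2 = (-(g p * (v 0 * h 0 0 p + v 1 * h 1 0 p) + u 0 p * (-(g p * (g p * g p)) * (u 0 p * (v 0 * h 0 0 p + v 1 * h 1 0 p) + u 1 p * (v 0 * h 0 1 p + v 1 * h 1 1 p)))))^2 + (-(g p * (v 0 * h 0 1 p + v 1 * h 1 1 p) + u 1 p * (-(g p * (g p * g p)) * (u 0 p * (v 0 * h 0 0 p + v 1 * h 1 0 p) + u 1 p * (v 0 * h 0 1 p + v 1 * h 1 1 p)))))^2 + ((-(g p * (g p * g p)) * (u 0 p * (v 0 * h 0 0 p + v 1 * h 1 0 p) + u 1 p * (v 0 * h 0 1 p + v 1 * h 1 1 p))))^2 := by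
    rw [hNd.fderiv]
    rw [← real_inner_self_eq_norm_sq]
    simp only [ContinuousLinearMap.coe_comp', Function.comp_apply,
      ContinuousLinearEquiv.coe_coe, PiLp.inner_apply, RCLike.inner_apply, conj_trivial,
      Fin.sum_univ_three, PiLp.continuousLinearEquiv_symm_apply, WithLp.equiv_symm_apply, PiLp.toLp_apply,
      ContinuousLinearMap.pi_apply, ContinuousLinearMap.neg_apply,
      ContinuousLinearMap.add_apply, ContinuousLinearMap.smul_apply, smul_eq_mul,
      Matrix.cons_val_zero, Matrix.cons_val_one, Matrix.head_cons, Matrix.cons_val_two,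
      Matrix.tail_cons, hDuv]
    ring
  -- gradient of I
  have hgradI : ∀ i : Fin 2, gradient I p i = fderiv ℝ I p (e i) := fun i => hgradco I p i
  have hgrad0 : gradient I p 0 = L 0 * -(g p * h 0 0 p + u 0 p * (-(g p * (g p * g p)) * (u 0 p * h 0 0 p + u 1 p * h 0 1 p))) + L 1 * -(g p * h 0 1 p + u 1 p * (-(g p * (g p * g p)) * (u 0 p * h 0 0 p + u 1 p * h 0 1 p))) + L 2 * (-(g p * (g p * g p)) * (u 0 p * h 0 0 p + u 1 p * h 0 1 p)) := by
    rw [hgradI 0, hIy p (e 0)]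
  have hgrad1 : gradient I p 1 = L 0 * -(g p * h 1 0 p + u 0 p * (-(g p * (g p * g p)) * (u 0 p * h 1 0 p + u 1 p * h 1 1 p))) + L 1 * -(g p * h 1 1 p + u 1 p * (-(g p * (g p * g p)) * (u 0 p * h 1 0 p + u 1 p * h 1 1 p))) + L 2 * (-(g p * (g p * g p)) * (u 0 p * h 1 0 p + u 1 p * h 1 1 p)) := by
    rw [hgradI 1, hIy p (e 1)]
  -- the vector w and its defining equations
  set W : Fin 2 → ℝ := Matrix.mulVec (Hm p)⁻¹ (Matrix.mulVec DvH (fun i => v i)) with hW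
  have hHW : Matrix.mulVec (Hm p) W = Matrix.mulVec DvH (fun i => v i) := by
    rw [hW, Matrix.mulVec_mulVec, Matrix.mul_nonsing_inv _ ((Matrix.isUnit_iff_isUnit_det (Hm p)).mp hHinv),
      Matrix.one_mulVec]
  have hHmh : ∀ a b : Fin 2, Hm p a b = h a b p := fun a b => hHm p a b
  have hw0 : h 0 0 p * W 0 + h 0 1 p * W 1 = DvH 0 0 * v 0 + DvH 0 1 * v 1 := by
    have := congrFun hHW 0
    simpa [Matrix.mulVec, dotProduct, Fin.sum_univ_two, hHmh] using this
  have hw1 : h 1 0 p * W 0 + h 1 1 p * W 1 = DvH 1 0 * v 0 + DvH 1 1 * v 1 := by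
    have := congrFun hHW 1
    simpa [Matrix.mulVec, dotProduct, Fin.sum_univ_two, hHmh] using this
  -- symmetry of the Hessian and its derivative
  have hfd2 : ContDiff ℝ (⊤ : ℕ∞) (fderiv ℝ f) := hf.fderiv_right (by simp)
  have hsnd : ∀ q, HasFDerivAt (fderiv ℝ f) (fderiv ℝ (fderiv ℝ f) q) q := fun q =>
    ((hfd2.differentiable (by simp)) q).hasFDerivAt
  have hcomp : ∀ (b : Fin 2) (q : EuclideanSpace ℝ (Fin 2)),
      HasFDerivAt (u b) ((ContinuousLinearMap.apply ℝ ℝ (e b)).comp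
        (fderiv ℝ (fderiv ℝ f) q)) q := fun b q =>
    (ContinuousLinearMap.apply ℝ ℝ (e b)).hasFDerivAt.comp q (hsnd q)
  have hhsnd : ∀ (a b : Fin 2) (q : EuclideanSpace ℝ (Fin 2)),
      h a b q = fderiv ℝ (fderiv ℝ f) q (e a) (e b) := by
    intro a b q
    show fderiv ℝ (u b) q (e a) = _
    rw [(hcomp b q).fderiv]
    rfl
  have hsymf : ∀ q : EuclideanSpace ℝ (Fin 2), h 0 1 q = h 1 0 q := by
    intro q
    rw [hhsnd, hhsnd]
    exact (hf.contDiffAt.isSymmSndFDerivAt (by rw [minSmoothness_of_isRCLikeNormedField]; exact WithTop.coe_le_coe.mpr (le_top : (2:ℕ∞) ≤ ⊤))) (e 0) (e 1)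
  have hsym : h 0 1 p = h 1 0 p := hsymf p
  have hTsym : DvH 0 1 = DvH 1 0 := by
    rw [← hT 0 1, ← hT 1 0]
    have hfe : h 0 1 = h 1 0 := funext fun q => hsymf q
    rw [hfe]
  -- positivity of g
  have hg0 : g p ≠ 0 := by
    rw [hg_def]
    exact inv_ne_zero (hgpos p).ne'
  have hg2 : g p * g p * (1 + u 0 p ^ 2 + u 1 p ^ 2) = 1 := by
    rw [hg_def]
    have h2 : Real.sqrt (1 + u 0 p ^ 2 + u 1 p ^ 2) * Real.sqrt (1 + u 0 p ^ 2 + u 1 p ^ 2)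
        = 1 + u 0 p ^ 2 + u 1 p ^ 2 := Real.mul_self_sqrt (by positivity)
    field_simp
    rw [Real.sq_sqrt (by positivity)]
  -- assemble the goal as a scalar identity
  rw [hLHS, hIp, hNn,
    show dotProduct (fun i => gradient I p i) W
        = gradient I p 0 * W 0 + gradient I p 1 * W 1 by
      simp [dotProduct, Fin.sum_univ_two],
    hgrad0, hgrad1]
  have wq : W 0 * (u 0 p * h 0 0 p + u 1 p * h 0 1 p)
      + W 1 * (u 0 p * h 1 0 p + u 1 p * h 1 1 p)
      = u 0 p * (v 0 * DvH 0 0 + v 1 * DvH 1 0) + u 1 p * (v 0 * DvH 0 1 + v 1 * DvH 1 1) := by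
    linear_combination u 0 p * hw0 + u 1 p * hw1 + (W 0 * u 1 p - W 1 * u 0 p) * hsym +
      (u 0 p * v 1 - u 1 p * v 0) * hTsym
  have wh0 : W 0 * h 0 0 p + W 1 * h 1 0 p = (v 0 * DvH 0 0 + v 1 * DvH 1 0) := by
    linear_combination hw0 + (-(W 1)) * hsym + v 1 * hTsym
  have wh1 : W 0 * h 0 1 p + W 1 * h 1 1 p = (v 0 * DvH 0 1 + v 1 * DvH 1 1) := by
    linear_combination hw1 + W 0 * hsym + (-(v 0)) * hTsym
  have hnn : (-(g p * (v 0 * h 0 0 p + v 1 * h 1 0 p) + u 0 p * (-(g p * (g p * g p)) * (u 0 p * (v 0 * h 0 0 p + v 1 * h 1 0 p) + u 1 p * (v 0 * h 0 1 p + v 1 * h 1 1 p)))))^2 + (-(g p * (v 0 * h 0 1 p + v 1 * h 1 1 p) + u 1 p * (-(g p * (g p * g p)) * (u 0 p * (v 0 * h 0 0 p + v 1 * h 1 0 p) + u 1 p * (v 0 * h 0 1 p + v 1 * h 1 1 p)))))^2 + (-(g p * (g p * g p)) * (u 0 p * (v 0 * h 0 0 p + v 1 * h 1 0 p) + u 1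 p * (v 0 * h 0 1 p + v 1 * h 1 1 p)))^2 = (((v 0 * h 0 0 p + v 1 * h 1 0 p)^2 + (v 0 * h 0 1 p + v 1 * h 1 1 p)^2) * g p ^ 2 - (u 0 p * (v 0 * h 0 0 p + v 1 * h 1 0 p) + u 1 p * (v 0 * h 0 1 p + v 1 * h 1 1 p))^2 * g p ^ 4) := by
    linear_combination (u 0 p * (v 0 * h 0 0 p + v 1 * h 1 0 p) + u 1 p * (v 0 * h 0 1 p + v 1 * h 1 1 p))^2 * g p ^ 4 * hg2
  have A2 : (-((v 0 * h 0 0 p + v 1 * h 1 0 p)^2 + (v 0 * h 0 1 p + v 1 * h 1 1 p)^2 + u 0 p * (v 0 * DvH 0 0 + v 1 * DvH 1 0) + u 1 p * (v 0 * DvH 0 1 + v 1 * DvH 1 1)) * g p ^ 3 + 3 * (u 0 p * (v 0 * h 0 0 p + v 1 * h 1 0 p) + u 1 p * (v 0 * h 0 1 p + v 1 * h 1 1 p))^2 * g p ^ 5) = -(((v 0 * h 0 0 p + v 1 * h 1 0 p)^2 + (v 0 * h 0 1 p + v 1 * h 1 1 p)^2) * g p ^ 2 - (u 0 p * (v 0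 * h 0 0 p + v 1 * h 1 0 p) + u 1 p * (v 0 * h 0 1 p + v 1 * h 1 1 p))^2 * g p ^ 4) * g p + W 0 * (-(g p * (g p * g p)) * (u 0 p * h 0 0 p + u 1 p * h 0 1 p)) + W 1 * (-(g p * (g p * g p)) * (u 0 p * h 1 0 p + u 1 p * h 1 1 p)) + (-2 * (u 0 p * (v 0 * h 0 0 p + v 1 * h 1 0 p) + u 1 p * (v 0 * h 0 1 p + v 1 * h 1 1 p)) * g p ^ 2) * (-(g p * (g p * g p)) * (u 0 p * (v 0 * h 0 0 p + v 1 * h 1 0 p) + u 1 p * (v 0 * h 0 1 p + v 1 * h 1 1 p))) := by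
    linear_combination g p ^ 3 * wq
  have A0 : -((-((v 0 * h 0 0 p + v 1 * h 1 0 p)^2 + (v 0 * h 0 1 p + v 1 * h 1 1 p)^2 + u 0 p * (v 0 * DvH 0 0 + v 1 * DvH 1 0) + u 1 p * (v 0 * DvH 0 1 + v 1 * DvH 1 1)) * g p ^ 3 + 3 * (u 0 p * (v 0 * h 0 0 p + v 1 * h 1 0 p) + u 1 p * (v 0 * h 0 1 p + v 1 * h 1 1 p))^2 * g p ^ 5) * u 0 p + 2 * (-((u 0 p * (v 0 * h 0 0 p + v 1 * h 1 0 p) + u 1 p * (v 0 * h 0 1 p + v 1 * h 1 1 p))) * g p ^ 3) * (v 0 * h 0 0 p + v 1 * h 1 0 p) + g p * (v 0 * DvH 0 0 + v 1 * DvH 1 0))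
      = (((v 0 * h 0 0 p + v 1 * h 1 0 p)^2 + (v 0 * h 0 1 p + v 1 * h 1 1 p)^2) * g p ^ 2 - (u 0 p * (v 0 * h 0 0 p + v 1 * h 1 0 p) + u 1 p * (v 0 * h 0 1 p + v 1 * h 1 1 p))^2 * g p ^ 4) * g p * u 0 p + W 0 * (-((-(g p * (g p * g p)) * (u 0 p * h 0 0 p + u 1 p * h 0 1 p)) * u 0 p + g p * h 0 0 p))
        + W 1 * (-((-(g p * (g p * g p)) * (u 0 p * h 1 0 p + u 1 p * h 1 1 p)) * u 0 p + g p * h 1 0 p)) + (-2 * (u 0 p * (v 0 * h 0 0 p + v 1 * h 1 0 p) + u 1 p * (v 0 * h 0 1 p + v 1 * h 1 1 p)) * g p ^ 2) * (-((-(g p * (g p * g p)) * (u 0 p * (v 0 * h 0 0 p + v 1 * h 1 0 p) + u 1 p * (v 0 * h 0 1 p + v 1 * h 1 1 p))) * u 0 p + g p * (v 0 * h 0 0 p + v 1 * h 1 0 p))) := by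
    linear_combination (-(u 0 p)) * A2 + g p * wh0
  have A1 : -((-((v 0 * h 0 0 p + v 1 * h 1 0 p)^2 + (v 0 * h 0 1 p + v 1 * h 1 1 p)^2 + u 0 p * (v 0 * DvH 0 0 + v 1 * DvH 1 0) + u 1 p * (v 0 * DvH 0 1 + v 1 * DvH 1 1)) * g p ^ 3 + 3 * (u 0 p * (v 0 * h 0 0 p + v 1 * h 1 0 p) + u 1 p * (v 0 * h 0 1 p + v 1 * h 1 1 p))^2 * g p ^ 5) * u 1 p + 2 * (-((u 0 p * (v 0 * h 0 0 p + v 1 * h 1 0 p) + u 1 p * (v 0 * h 0 1 p + v 1 * h 1 1 p))) * g p ^ 3) * (v 0 * h 0 1 p + v 1 * h 1 1 p) + g p * (v 0 * DvH 0 1 + v 1 * DvH 1 1))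
      = (((v 0 * h 0 0 p + v 1 * h 1 0 p)^2 + (v 0 * h 0 1 p + v 1 * h 1 1 p)^2) * g p ^ 2 - (u 0 p * (v 0 * h 0 0 p + v 1 * h 1 0 p) + u 1 p * (v 0 * h 0 1 p + v 1 * h 1 1 p))^2 * g p ^ 4) * g p * u 1 p + W 0 * (-((-(g p * (g p * g p)) * (u 0 p * h 0 0 p + u 1 p * h 0 1 p)) * u 1 p + g p * h 0 1 p))
        + W 1 * (-((-(g p * (g p * g p)) * (u 0 p * h 1 0 p + u 1 p * h 1 1 p)) * u 1 p + g p * h 1 1 p)) + (-2 * (u 0 p * (v 0 * h 0 0 p + v 1 * h 1 0 p) + u 1 p * (v 0 * h 0 1 p + v 1 * h 1 1 p)) * g p ^ 2) * (-((-(g p * (g p * g p)) * (u 0 p * (v 0 * h 0 0 p + v 1 * h 1 0 p) + u 1 p * (v 0 * h 0 1 p + v 1 * h 1 1 p))) * u 1 p + g p * (v 0 * h 0 1 p + v 1 * h 1 1 p))) := by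
    linear_combination (-(u 1 p)) * A2 + g p * wh1
  linear_combination L 0 * A0 + L 1 * A1 + L 2 * A2 + (-2 * (u 0 p * (v 0 * h 0 0 p + v 1 * h 1 0 p) + u 1 p * (v 0 * h 0 1 p + v 1 * h 1 1 p)) * g p ^ 2) * hiso' + (L 0 * -(g p * u 0 p) + L 1 * -(g p * u 1 p) + L 2 * g p) * hnn
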